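/- Let j, k, n, s, t, o, h be positive integers with j, k ≥ 1, n ≥ max(j,k), o ≥ 2 even, s ≤ t, n = o/2 + t + s − 1, h = j+k+n+1, t+k ≥ s+j, and j+k+1 ≤ ⌊h/2⌋. Define Φ₁ = 6·[2(j+1)(n−k) + 2(k+1)(n−j) + o·(t+k−s−j) + 4∑_{i=1}^{j}(h+1−2i) + 4∑_{i=1}^{k}(h+1−2i) + 2∑_{i=1}^{j}(h−2i) + 2∑_{i=1}^{k}(h−2i)] and Φ₂ = 6·[(o+2(j+k))·(t−s) + 4∑_{i=1}^{j+k+1}|h+1−2i| + 2∑_{i=1}^{j+k}|h−2i|]. Then Φ₁ − Φ₂ = 12·(ok + 2(k+j)s + 4kj) > 0. -/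

import Mathlib

/-!
After removing the absolute values (every term is nonnegative because `2(j + k + 1) ≤ h`),
all six sums are arithmetic progressions with closed form `∑_{i=1}^m (c - 2i) = mc - m(m+1)`.
Substituting these, `h = j + k + n + 1` and `o = 2(n - t - s + 1)` turns the difference into a
polynomial identity, and the right-hand side is positive since its summand `4kj` is.
-/

open Finset

theorem sum_Icc_sub_two_mul (c : ℤ) (m : ℕ) :
    ∑ i ∈ Icc 1 m, (c - 2 * (i : ℤ)) = m * c - m * (m + 1) := by
  induction m with
  | zero => simp
  | succ m ih =>
    rw [sum_Icc_succ_top (by omega), ih]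
    push_cast
    ring

theorem sum_Icc_abs_sub_two_mul_of_le {c : ℤ} {m : ℕ} (hm : 2 * (m : ℤ) ≤ c) :
    ∑ i ∈ Icc 1 m, |c - 2 * (i : ℤ)| = m * c - m * (m + 1) := by
  rw [← sum_Icc_sub_two_mul]
  refine sum_congr rfl fun i hi => abs_of_nonneg ?_
  have : (i : ℤ) ≤ m := by exact_mod_cast (mem_Icc.mp hi).2
  linarith

theorem lemma33_subcase11_general (j k n s t o h : ℕ)
    (hj : 1 ≤ j) (hk : 1 ≤ k) (hoe : Even o)
    (hneq : (n : ℤ) = (o : ℤ) / 2 + (t : ℤ) + (s : ℤ) - 1)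
    (hh : h = j + k + n + 1) (hjk : j + k + 1 ≤ h / 2) :
    (6 * (2 * ((j : ℤ) + 1) * ((n : ℤ) - (k : ℤ)) +
          2 * ((k : ℤ) + 1) * ((n : ℤ) - (j : ℤ)) +
          (o : ℤ) * ((t : ℤ) + (k : ℤ) - (s : ℤ) - (j : ℤ)) +
          4 * ∑ i ∈ Finset.Icc 1 j, ((h : ℤ) + 1 - 2 * (i : ℤ)) +
          4 * ∑ i ∈ Finset.Icc 1 k, ((h : ℤ) + 1 - 2 * (i : ℤ)) +
          2 * ∑ i ∈ Finset.Icc 1 j, ((h : ℤ) - 2 * (i : ℤ)) +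
          2 * ∑ i ∈ Finset.Icc 1 k, ((h : ℤ) - 2 * (i : ℤ)))) -
      (6 * (((o : ℤ) + 2 * ((j : ℤ) + (k : ℤ))) * ((t : ℤ) - (s : ℤ)) +
          4 * ∑ i ∈ Finset.Icc 1 (j + k + 1), |(h : ℤ) + 1 - 2 * (i : ℤ)| +
          2 * ∑ i ∈ Finset.Icc 1 (j + k), |(h : ℤ) - 2 * (i : ℤ)|)) =
      12 * ((o : ℤ) * (k : ℤ) + 2 * ((k : ℤ) + (j : ℤ)) * (s : ℤ) + 4 * (k : ℤ) * (j : ℤ)) ∧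
    (0 : ℤ) <
      12 * ((o : ℤ) * (k : ℤ) + 2 * ((k : ℤ) + (j : ℤ)) * (s : ℤ) + 4 * (k : ℤ) * (j : ℤ)) := by
  have hh2 : 2 * ((j : ℤ) + k + 1) ≤ h := by
    have := Nat.div_mul_le_self h 2
    omega
  have ho : (o : ℤ) = 2 * ((n : ℤ) - t - s + 1) := by
    obtain ⟨m, rfl⟩ := hoe
    omega
  constructor
  · rw [sum_Icc_abs_sub_two_mul_of_le (by push_cast; linarith),
      sum_Icc_abs_sub_two_mul_of_le (by push_cast; linarith)]
    simp only [sum_Icc_sub_two_mul, hh]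
    push_cast
    linear_combination (-6 * ((j : ℤ) + k)) * ho
  · positivity

/-- Subcase 1.1 of Lemma 3.3: the difference of the two cut contributions equals
`12(ok + 2(k+j)s + 4kj) > 0`. -/
theorem lemma33_subcase11 (j k n s t o h : ℕ)
    (hj : 1 ≤ j) (hk : 1 ≤ k) (hs : 1 ≤ s) (ht : 1 ≤ t) (ho2 : 2 ≤ o) (hoe : Even o)
    (hn : n ≥ max j k) (hst : s ≤ t) (hneq : (n : ℤ) = (o : ℤ) / 2 + (t : ℤ) + (s : ℤ) - 1)
    (hh : h = j + k + n + 1) (htk : s + j ≤ t + k) (hjk : j + k + 1 ≤ h / 2) :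
    (6 * (2 * ((j : ℤ) + 1) * ((n : ℤ) - (k : ℤ)) +
          2 * ((k : ℤ) + 1) * ((n : ℤ) - (j : ℤ)) +
          (o : ℤ) * ((t : ℤ) + (k : ℤ) - (s : ℤ) - (j : ℤ)) +
          4 * ∑ i ∈ Finset.Icc 1 j, ((h : ℤ) + 1 - 2 * (i : ℤ)) +
          4 * ∑ i ∈ Finset.Icc 1 k, ((h : ℤ) + 1 - 2 * (i : ℤ)) +
          2 * ∑ i ∈ Finset.Icc 1 j, ((h : ℤ) - 2 * (i : ℤ)) +
          2 * ∑ i ∈ Finset.Icc 1 k, ((h : ℤ) - 2 * (i : ℤ)))) -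
      (6 * (((o : ℤ) + 2 * ((j : ℤ) + (k : ℤ))) * ((t : ℤ) - (s : ℤ)) +
          4 * ∑ i ∈ Finset.Icc 1 (j + k + 1), |(h : ℤ) + 1 - 2 * (i : ℤ)| +
          2 * ∑ i ∈ Finset.Icc 1 (j + k), |(h : ℤ) - 2 * (i : ℤ)|)) =
      12 * ((o : ℤ) * (k : ℤ) + 2 * ((k : ℤ) + (j : ℤ)) * (s : ℤ) + 4 * (k : ℤ) * (j : ℤ)) ∧
    (0 : ℤ) <
      12 * ((o : ℤ) * (k : ℤ) + 2 * ((k : ℤ) + (j : ℤ)) * (s : ℤ) + 4 * (k : ℤ) * (j : ℤ)) :=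
  lemma33_subcase11_general j k n s t o h hj hk hoe hneq hh hjk
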